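/- Consider the quotient ring R̂^{D_0} = M(ℝ^{D_0})/N(ℝ^{D_0}) of moderate real-valued nets modulo negligible nets. For a nonzero class a ∈ R̂^{D_0}, declare a > 0 if some (equivalently, every) representative net (A_φ) of a satisfies A_φ > 0 a.e. Then: (1) this relation is well defined (independent of the representative) on nonzero classes; (2) for every nonzero a ∈ R̂^{D_0} exactly one of a > 0 and −a > 0 holds, and the relation is compatible with addition and multiplication, so R̂^{D_0} is a totally ordered field; (3) for every a ∈ R̂^{D_0}, a ≥ 0 (i.e. a = 0 or a > 0) if and only if a = b² for some b ∈ R̂^{D_0}. -/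

import Mathlib

open MeasureTheory Filter

noncomputable section

/-- ℝ^d with the Euclidean norm. -/
abbrev Rd (d : ℕ) := EuclideanSpace ℝ (Fin d)

/-- The partial derivative in the `i`-th coordinate direction. -/
noncomputable def pderivI (d : ℕ) (i : Fin d) (f : Rd d → ℂ) : Rd d → ℂ :=
  fun x => fderiv ℝ f x (EuclideanSpace.single i (1 : ℝ))

/-- The iterated partial derivative `∂^α` of multi-index order `α`. -/
noncomputable def multiDeriv (d : ℕ) (α : Fin d → ℕ) (f : Rd d → ℂ) : Rd d → ℂ :=
  ((List.ofFn fun i : Fin d => (pderivI d i)^[α i]).foldr (· ∘ ·) id) f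

-- The radius of support `R_φ`.
open Classical in
noncomputable def radSupp (d : ℕ) (φ : Rd d → ℂ) : ℝ :=
  if φ = 0 then 1 else sSup {r : ℝ | ∃ x, φ x ≠ 0 ∧ r = ‖x‖}

/-- The type of test functions `D(ℝ^d)`: smooth compactly supported `φ : ℝ^d → ℂ`. -/
def TestFun (d : ℕ) := {φ : Rd d → ℂ // ContDiff ℝ (⊤ : ℕ∞) φ ∧ HasCompactSupport φ}

/-- The directing set `D_n`. -/
def directingSet (d n : ℕ) : Set (TestFun d) :=
  {φ | (∀ x, (φ.1 x).im = 0) ∧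
       (∀ x, φ.1 (-x) = φ.1 x) ∧
       radSupp d φ.1 ≤ 1 / n ∧
       (∫ x, φ.1 x) = 1 ∧
       (∀ α : Fin d → ℕ, 1 ≤ ∑ i, α i → ∑ i, α i ≤ n →
          (∫ x, (∏ i, (x i : ℂ) ^ α i) * φ.1 x) = 0) ∧
       (∫ x, ‖φ.1 x‖) ≤ 1 + 1 / n ∧
       (∀ α : Fin d → ℕ, ∑ i, α i ≤ n → ∀ x,
          ‖multiDeriv d α φ.1 x‖ ≤ radSupp d φ.1 ^ (-(2 * ((∑ i, α i) + d) : ℤ)))}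

end

/-- A real net `A : D_0 → ℝ` is *moderate* if `|A_φ| ≤ R_φ^{−m}` a.e. for some `m ∈ ℕ`. -/
def ModerateR (d : ℕ) (U : Ultrafilter (TestFun d)) (A : TestFun d → ℝ) : Prop :=
  ∃ m : ℕ, {φ : TestFun d | |A φ| ≤ radSupp d φ.1 ^ (-(m : ℤ))} ∈ U

/-- A real net `A : D_0 → ℝ` is *negligible* if `|A_φ| < R_φ^p` a.e. for every `p ∈ ℕ`. -/
def NegligibleR (d : ℕ) (U : Ultrafilter (TestFun d)) (A : TestFun d → ℝ) : Prop :=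
  ∀ p : ℕ, {φ : TestFun d | |A φ| < radSupp d φ.1 ^ p} ∈ U

/-- `A_φ > 0` almost everywhere. -/
def PosAE (d : ℕ) (U : Ultrafilter (TestFun d)) (A : TestFun d → ℝ) : Prop :=
  {φ : TestFun d | 0 < A φ} ∈ U

/-!
Along `U` the radius of support lies in `(0, 1]`. So a non-negligible net satisfies
`R_φ ^ p ≤ |A_φ|` a.e. for some `p`, whereas a negligible perturbation is
`< R_φ ^ (p + 1) ≤ R_φ ^ p` a.e. and cannot change the sign of `A_φ`: this gives
well-definedness and, with `B * B ≥ 0`, that squares are nonnegative. Trichotomy holds because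
the ultrafilter decides the pointwise trichotomy `A_φ > 0`, `A_φ < 0`, `A_φ = 0`, the last case
being negligible. Finally, an a.e. positive moderate net has the moderate square root `√A_φ`.
-/

lemma radSupp_pos {d : ℕ} (hd : 0 < d) {φ : Rd d → ℂ} (hφ : HasCompactSupport φ)
    (hint : ∫ x, φ x ≠ 0) : 0 < radSupp d φ := by
  have : Nonempty (Fin d) := ⟨⟨0, hd⟩⟩
  have hne : φ ≠ 0 := by rintro rfl; simp at hint
  -- otherwise `φ` vanishes off the null set `{0}`, so its integral is `0`
  obtain ⟨x, hx, hx0⟩ : ∃ x, φ x ≠ 0 ∧ x ≠ 0 := by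
    by_contra! h
    exact hint (integral_eq_zero_of_ae (measure_mono_null (fun x hx => h x hx)
      (measure_singleton 0)))
  obtain ⟨C, hC⟩ := hφ.isBounded.exists_norm_le
  have hbdd : BddAbove {r : ℝ | ∃ x, φ x ≠ 0 ∧ r = ‖x‖} := by
    refine ⟨C, ?_⟩
    rintro _ ⟨y, hy, rfl⟩
    exact hC y (subset_tsupport φ hy)
  rw [radSupp, if_neg hne]
  exact (norm_pos_iff.2 hx0).trans_le (le_csSup hbdd ⟨x, hx, rfl⟩)

lemma eventually_radSupp_mem_Ioc {d : ℕ} (hd : 0 < d) {U : Ultrafilter (TestFun d)}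
    (hU : directingSet d 1 ∈ U) : ∀ᶠ φ : TestFun d in U, radSupp d φ.1 ∈ Set.Ioc 0 1 := by
  filter_upwards [hU] with φ hφ
  obtain ⟨-, -, hrad, hint, -⟩ := hφ
  exact ⟨radSupp_pos hd φ.2.2 (by simp [hint]), by simpa using hrad⟩

lemma pos_iff_pos_of_abs_sub_lt_abs {a b : ℝ} (h : |a - b| < |a|) : 0 < a ↔ 0 < b := by
  constructor <;> intro <;> cases abs_cases a <;> cases abs_cases (a - b) <;> linarith

lemma pos_of_abs_sub_lt_abs {a b : ℝ} (h : |a - b| < |a|) (hb : 0 ≤ b) : 0 < a := by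
  cases abs_cases a <;> cases abs_cases (a - b) <;> linarith

section

variable {d : ℕ} {U : Ultrafilter (TestFun d)} {A B : TestFun d → ℝ}

lemma not_negligibleR_iff :
    ¬ NegligibleR d U A ↔
      ∃ p : ℕ, ∀ᶠ φ : TestFun d in U, radSupp d φ.1 ^ p ≤ |A φ| := by
  simp only [NegligibleR, not_forall]
  refine exists_congr fun p => ?_
  rw [← Ultrafilter.compl_mem_iff_notMem]
  simp [Set.compl_def, Filter.Eventually]

lemma moderateR_zero : ModerateR d U 0 :=
  ⟨0, Filter.univ_mem' fun φ => by simp⟩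

lemma negligibleR_of_eventually_eq_zero
    (hR : ∀ᶠ φ : TestFun d in U, radSupp d φ.1 ∈ Set.Ioc 0 1)
    (hA : ∀ᶠ φ : TestFun d in U, A φ = 0) : NegligibleR d U A := fun p => by
  filter_upwards [hR, hA] with φ hφ hAφ
  simpa [hAφ] using pow_pos hφ.1 p

lemma eventually_abs_sub_lt_abs (hR : ∀ᶠ φ : TestFun d in U, radSupp d φ.1 ∈ Set.Ioc 0 1)
    (hA : ¬ NegligibleR d U A) (hAB : NegligibleR d U (A - B)) :
    ∀ᶠ φ : TestFun d in U, |A φ - B φ| < |A φ| := by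
  obtain ⟨p, hp⟩ := not_negligibleR_iff.1 hA
  filter_upwards [hR, hp, hAB (p + 1)] with φ ⟨hr0, hr1⟩ hpA hAB
  calc |A φ - B φ| < radSupp d φ.1 ^ (p + 1) := hAB
    _ ≤ radSupp d φ.1 ^ p := pow_le_pow_of_le_one hr0.le hr1 p.le_succ
    _ ≤ |A φ| := hpA

lemma posAE_iff_of_negligibleR_sub (hR : ∀ᶠ φ : TestFun d in U, radSupp d φ.1 ∈ Set.Ioc 0 1)
    (hA : ¬ NegligibleR d U A) (hAB : NegligibleR d U (A - B)) :
    PosAE d U A ↔ PosAE d U B := by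
  have h := (eventually_abs_sub_lt_abs hR hA hAB).mono fun φ => pos_iff_pos_of_abs_sub_lt_abs
  exact ⟨fun hA' => (h.and hA').mono fun φ h => h.1.1 h.2,
    fun hB' => (h.and hB').mono fun φ h => h.1.2 h.2⟩

lemma posAE_of_negligibleR_sub_mul_self
    (hR : ∀ᶠ φ : TestFun d in U, radSupp d φ.1 ∈ Set.Ioc 0 1)
    (hA : ¬ NegligibleR d U A) (hAB : NegligibleR d U (A - B * B)) : PosAE d U A :=
  (eventually_abs_sub_lt_abs hR hA hAB).mono fun φ h =>
    pos_of_abs_sub_lt_abs h (mul_self_nonneg (B φ))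

lemma posAE_xor_posAE_neg (hR : ∀ᶠ φ : TestFun d in U, radSupp d φ.1 ∈ Set.Ioc 0 1)
    (hA : ¬ NegligibleR d U A) : Xor (PosAE d U A) (PosAE d U (-A)) := by
  have hdisj : ¬ (PosAE d U A ∧ PosAE d U (-A)) := fun ⟨hpos, hneg⟩ => by
    obtain ⟨φ, h1, h2⟩ := U.nonempty_of_mem (Filter.inter_mem hpos hneg)
    simp only [Set.mem_ofPred_eq, Pi.neg_apply] at h1 h2
    linarith
  have htri : ∀ᶠ φ : TestFun d in U, 0 < A φ ∨ 0 < (-A) φ ∨ A φ = 0 :=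
    Filter.Eventually.of_forall fun φ => by
      rcases lt_trichotomy (A φ) 0 with h | h | h
      · exact Or.inr (Or.inl (neg_pos.2 h))
      · exact Or.inr (Or.inr h)
      · exact Or.inl h
  rcases Ultrafilter.eventually_or.1 htri with hpos | hrest
  · exact Or.inl ⟨hpos, fun hneg => hdisj ⟨hpos, hneg⟩⟩
  rcases Ultrafilter.eventually_or.1 hrest with hneg | hzero
  · exact Or.inr ⟨hneg, fun hpos => hdisj ⟨hpos, hneg⟩⟩
  · exact absurd (negligibleR_of_eventually_eq_zero hR hzero) hA

lemma PosAE.add (hA : PosAE d U A) (hB : PosAE d U B) : PosAE d U (A + B) := by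
  filter_upwards [hA, hB] with φ hAφ hBφ using add_pos hAφ hBφ

lemma PosAE.mul (hA : PosAE d U A) (hB : PosAE d U B) : PosAE d U (A * B) := by
  filter_upwards [hA, hB] with φ hAφ hBφ using mul_pos hAφ hBφ

lemma not_negligibleR_add (hA : ¬ NegligibleR d U A) (hA' : PosAE d U A) (hB : PosAE d U B) :
    ¬ NegligibleR d U (A + B) := by
  obtain ⟨p, hp⟩ := not_negligibleR_iff.1 hA
  refine not_negligibleR_iff.2 ⟨p, ?_⟩
  filter_upwards [hp, hA', hB] with φ hpA hAφ hBφ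
  rw [Pi.add_apply, abs_of_pos (add_pos hAφ hBφ)]
  linarith [abs_of_pos hAφ]

lemma not_negligibleR_mul (hR : ∀ᶠ φ : TestFun d in U, radSupp d φ.1 ∈ Set.Ioc 0 1)
    (hA : ¬ NegligibleR d U A) (hB : ¬ NegligibleR d U B) : ¬ NegligibleR d U (A * B) := by
  obtain ⟨p, hp⟩ := not_negligibleR_iff.1 hA
  obtain ⟨q, hq⟩ := not_negligibleR_iff.1 hB
  refine not_negligibleR_iff.2 ⟨p + q, ?_⟩
  filter_upwards [hR, hp, hq] with φ hr hpA hqB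
  rw [Pi.mul_apply, abs_mul, pow_add]
  exact mul_le_mul hpA hqB (pow_nonneg hr.1.le q) (abs_nonneg _)

lemma ModerateR.sqrt (hR : ∀ᶠ φ : TestFun d in U, radSupp d φ.1 ∈ Set.Ioc 0 1)
    (hA : ModerateR d U A) :
    ModerateR d U fun φ => √(A φ) := by
  obtain ⟨m, hm⟩ := hA
  refine ⟨m, ?_⟩
  filter_upwards [hR, hm] with φ ⟨hr0, hr1⟩ hAφ
  have hone : 1 ≤ radSupp d φ.1 ^ (-(m : ℤ)) :=
    one_le_zpow_of_nonpos₀ hr0 hr1 (by omega)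
  rw [abs_of_nonneg (Real.sqrt_nonneg _), Real.sqrt_le_left (by linarith)]
  nlinarith [le_abs_self (A φ)]

lemma exists_sq_of_posAE (hR : ∀ᶠ φ : TestFun d in U, radSupp d φ.1 ∈ Set.Ioc 0 1)
    (hA : ModerateR d U A) (hA' : PosAE d U A) : ∃ B, ModerateR d U B ∧ NegligibleR d U (A - B * B) :=
  ⟨_, hA.sqrt hR, negligibleR_of_eventually_eq_zero hR <| by
    filter_upwards [hA'] with φ hφ
    simp [Real.mul_self_sqrt hφ.le]⟩

end

/-- the order on `R̂^{D_0} = M(ℝ^{D_0})/N(ℝ^{D_0})` given on nonzero classes by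
`a > 0` iff a representative is positive a.e. is (1) well defined, (2) makes `R̂^{D_0}` a
totally ordered field (trichotomy on nonzero classes, compatibility with `+` and `*`), and
(3) `a ≥ 0` iff `a` is a square — all stated elementwise on representatives. -/
theorem quotient_totally_ordered_real_closed
    (d : ℕ) (hd : 0 < d) (U : Ultrafilter (TestFun d))
    (hU : ∀ n : ℕ, 1 ≤ n → directingSet d n ∈ U) :
    -- (1) well-definedness: representatives of the same nonzero class are a.e. positive together
    (∀ A B : TestFun d → ℝ, ModerateR d U A → ModerateR d U B → ¬ NegligibleR d U A →
      NegligibleR d U (A - B) → (PosAE d U A ↔ PosAE d U B)) ∧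
    -- (2) trichotomy: for a nonzero class exactly one of `a > 0`, `−a > 0` holds
    (∀ A : TestFun d → ℝ, ModerateR d U A → ¬ NegligibleR d U A →
      Xor' (PosAE d U A) (PosAE d U (-A))) ∧
    -- (2) compatibility with addition and multiplication (positive nonzero classes are closed)
    (∀ A B : TestFun d → ℝ, ModerateR d U A → ModerateR d U B →
      (¬ NegligibleR d U A ∧ PosAE d U A) → (¬ NegligibleR d U B ∧ PosAE d U B) →
      (¬ NegligibleR d U (A + B) ∧ PosAE d U (A + B)) ∧
      (¬ NegligibleR d U (A * B) ∧ PosAE d U (A * B))) ∧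
    -- (3) `a ≥ 0` iff `a = b²` for some `b`
    (∀ A : TestFun d → ℝ, ModerateR d U A →
      ((NegligibleR d U A ∨ (¬ NegligibleR d U A ∧ PosAE d U A)) ↔
        ∃ B : TestFun d → ℝ, ModerateR d U B ∧ NegligibleR d U (A - B * B))) := by
  have hR := eventually_radSupp_mem_Ioc hd (hU 1 le_rfl)
  refine ⟨fun A B _ _ hA hAB => posAE_iff_of_negligibleR_sub hR hA hAB,
    fun A _ hA => posAE_xor_posAE_neg hR hA,
    fun A B _ _ ⟨hA, hA'⟩ ⟨hB, hB'⟩ =>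
      ⟨⟨not_negligibleR_add hA hA' hB', hA'.add hB'⟩,
        ⟨not_negligibleR_mul hR hA hB, hA'.mul hB'⟩⟩,
    fun A hA => ⟨?_, ?_⟩⟩
  · rintro (hneg | ⟨-, hpos⟩)
    · exact ⟨0, moderateR_zero, by simpa using hneg⟩
    · exact exists_sq_of_posAE hR hA hpos
  · rintro ⟨B, -, hAB⟩
    by_cases hneg : NegligibleR d U A
    · exact Or.inl hneg
    · exact Or.inr ⟨hneg, posAE_of_negligibleR_sub_mul_self hR hneg hAB⟩
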